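/- Let j ∈ ℕ, ν₀ ∈ ℕ with ν₀ ≤ j, and let ℰ be the family of all sequences ε = (ε_k)_{k ∈ 𝒦_j} with ε_k ∈ {−1,0,1} such that for every dyadic cube Q_{−ν₀,m} ⊆ Q_{−j,0} there is exactly one k ∈ 𝒦_j with Q_{0,k} ⊆ Q_{−ν₀,m} and ε_k ≠ 0. Then: (a) the cardinality |{ε ∈ ℰ : ε_k ≠ 0}| is the same number α₀ for every k ∈ 𝒦_j, and |ℰ| = α₀ · 2^{ν₀ d}; (b) for every λ ∈ ℂ^{𝒦_j} and every k ∈ 𝒦_j one has ∑_{ε ∈ ℰ} (∑_{i ∈ 𝒦_j} ε_i λ_i) ε_k = α₀ λ_k; in particular the identity on ℂ^{𝒦_j} equals (2^{ν₀ d}/|ℰ|) ∑_{ε ∈ ℰ} ε ⊗ ε, where (ε ⊗ ε)(λ) = (∑_i ε_i λ_i) ε. -/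

import Mathlib

/-- The index set `𝒦_j = {k ∈ ℤ^d : Q_{0,k} ⊆ Q_{-j,0}}`, identified with
`(Fin d → Fin (2^j))` (the unit cubes inside the cube `[0, 2^j)^d`). -/
abbrev MorreyIdx (d j : ℕ) := Fin d → Fin (2 ^ j)

/-- `Q_{0,k} ⊆ Q_{-ν,m}` for a dyadic cube `Q_{-ν,m} ⊆ Q_{-j,0}` of side length `2^ν`,
where the cube is encoded by `m : Fin d → Fin (2^(j-ν))`: the condition is
`k i / 2^ν = m i` for all `i`. -/
def memSubcube {d j : ℕ} (ν : ℕ) (m : Fin d → ℕ) (k : MorreyIdx d j) : Prop :=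
  ∀ i, (k i : ℕ) / 2 ^ ν = m i

instance {d j : ℕ} (ν : ℕ) (m : Fin d → ℕ) (k : MorreyIdx d j) :
    Decidable (memSubcube ν m k) := by unfold memSubcube; infer_instance

/-- The norm of the finite-dimensional Morrey sequence space `m^{2^{jd}}_{u,p}`:
`‖λ‖ = max_{ν ≤ j, Q_{-ν,m} ⊆ Q_{-j,0}} |Q_{-ν,m}|^{1/u - 1/p}
   (∑_{k : Q_{0,k} ⊆ Q_{-ν,m}} |λ_k|^p)^{1/p}`, with `|Q_{-ν,m}| = 2^{νd}`. -/
noncomputable def morreyNorm (d j : ℕ) (u p : ℝ) (lam : MorreyIdx d j → ℂ) : ℝ :=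
  ⨆ ν : Fin (j + 1), ⨆ m : Fin d → Fin (2 ^ (j - (ν : ℕ))),
    (2 : ℝ) ^ ((((ν : ℕ) * d : ℕ) : ℝ) * (1 / u - 1 / p)) *
      (∑ k : MorreyIdx d j,
        if memSubcube (ν : ℕ) (fun i => (m i : ℕ)) k then ‖lam k‖ ^ p else 0) ^ (1 / p)

/-- The sup-norm on `ℂ^{𝒦_j}`, i.e. the norm of `ℓ∞^{2^{jd}}`. -/
noncomputable def supNorm (d j : ℕ) (lam : MorreyIdx d j → ℂ) : ℝ :=
  ⨆ k : MorreyIdx d j, ‖lam k‖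

/-- The operator norm of the identity map `(ℂ^{𝒦_j}, N₁) → (ℂ^{𝒦_j}, N₂)`. -/
noncomputable def idNorm (d j : ℕ) (N₁ N₂ : (MorreyIdx d j → ℂ) → ℝ) : ℝ :=
  sInf {C : ℝ | 0 ≤ C ∧ ∀ lam : MorreyIdx d j → ℂ, N₂ lam ≤ C * N₁ lam}

/-- The family `ℰ`: sequences `ε` with `ε_k ∈ {-1,0,1}` such that for every dyadic cube
`Q_{-ν₀,m} ⊆ Q_{-j,0}` (encoded by `m : Fin d → Fin (2^(j-ν₀))`) there is exactly one
`k ∈ 𝒦_j` with `Q_{0,k} ⊆ Q_{-ν₀,m}` and `ε_k ≠ 0`. -/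
def memE (d j ν₀ : ℕ) (ε : MorreyIdx d j → ℂ) : Prop :=
  (∀ k, ε k = -1 ∨ ε k = 0 ∨ ε k = 1) ∧
  ∀ m : Fin d → Fin (2 ^ (j - ν₀)), ∃! k : MorreyIdx d j,
    memSubcube ν₀ (fun i => (m i : ℕ)) k ∧ ε k ≠ 0

/-!
Write `k ∈ 𝒦_j` as the pair `(m, a)` of the cube `Q_{-ν₀,m}` containing `Q_{0,k}` and the
position `a` of `Q_{0,k}` inside it. An element of `ℰ` is then the same as a choice, for every
block `m`, of a position `a_m` and a sign `s_m = ±1`; hence `|ℰ| = (2 · 2^{ν₀d})^{#blocks}`, and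
`ε_k ≠ 0` for exactly `α₀ = 2 (2 · 2^{ν₀d})^{#blocks - 1}` of them. For (b) one shows
`∑_{ε ∈ ℰ} ε_i ε_k = α₀ δ_{ik}`: for `i ≠ k` in one block `ε_i ε_k = 0`, and for `i, k` in
different blocks flipping the sign of the block of `k` is an involution of `ℰ` negating `ε_i ε_k`.
-/

open Function

section SignedTransversal

variable {K B P : Type*}

def IsSignedTransversal (e : K ≃ B × P) (ε : K → ℂ) : Prop :=
  (∀ k, ε k = -1 ∨ ε k = 0 ∨ ε k = 1) ∧ ∀ b, ∃! k, (e k).1 = b ∧ ε k ≠ 0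

def signPattern [DecidableEq P] (e : K ≃ B × P) (c : B → P × ℤˣ) (k : K) : ℂ :=
  if (c (e k).1).1 = (e k).2 then ((c (e k).1).2 : ℤ) else 0

section Pattern

variable [DecidableEq P] (e : K ≃ B × P)

lemma signPattern_ne_zero_iff (c : B → P × ℤˣ) (k : K) :
    signPattern e c k ≠ 0 ↔ (c (e k).1).1 = (e k).2 := by
  unfold signPattern
  split_ifs with h
  · simp [h]
  · simpa using h

lemma signPattern_mul_self (c : B → P × ℤˣ) (k : K) :
    signPattern e c k * signPattern e c k = if (c (e k).1).1 = (e k).2 then 1 else 0 := by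
  unfold signPattern
  split_ifs
  · rw [← Int.cast_mul, ← Units.val_mul, Int.units_mul_self, Units.val_one, Int.cast_one]
  · rw [mul_zero]

lemma signPattern_injective : Injective (signPattern e) := by
  intro c c' h
  funext b
  have hk := congrFun h (e.symm (b, (c b).1))
  have hne : signPattern e c' (e.symm (b, (c b).1)) ≠ 0 :=
    hk ▸ (signPattern_ne_zero_iff e c _).2 (by simp)
  have hpos : (c' b).1 = (c b).1 := by simpa using (signPattern_ne_zero_iff e c' _).1 hne
  simp only [signPattern, Equiv.apply_symm_apply, hpos, if_true] at hk
  exact Prod.ext hpos.symm (Units.ext (Int.cast_injective hk))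

lemma isSignedTransversal_signPattern (c : B → P × ℤˣ) :
    IsSignedTransversal e (signPattern e c) := by
  refine ⟨fun k => ?_, fun b => ⟨e.symm (b, (c b).1), by simp [signPattern_ne_zero_iff], ?_⟩⟩
  · unfold signPattern
    split_ifs
    · rcases Int.units_eq_one_or (c (e k).1).2 with h | h <;> simp [h]
    · simp
  · rintro k ⟨rfl, hk⟩
    rw [Equiv.eq_symm_apply]
    exact Prod.ext rfl ((signPattern_ne_zero_iff e c k).1 hk).symm

lemma IsSignedTransversal.exists_signPattern_eq {ε : K → ℂ} (h : IsSignedTransversal e ε) :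
    ∃ c, signPattern e c = ε := by
  obtain ⟨hval, huniq⟩ := h
  choose t ht hunique using huniq
  have hsign : ∀ b, ∃ u : ℤˣ, ((u : ℤ) : ℂ) = ε (t b) := fun b => by
    rcases hval (t b) with h | h | h
    · exact ⟨-1, by simp [h]⟩
    · exact absurd h (ht b).2
    · exact ⟨1, by simp [h]⟩
  choose u hu using hsign
  refine ⟨fun b => ((e (t b)).2, u b), funext fun k => ?_⟩
  by_cases hk : k = t (e k).1
  · have hpos : (e (t (e k).1)).2 = (e k).2 := by rw [← hk]
    simp only [signPattern, hpos, if_true, hu]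
    rw [← hk]
  · have hzero : ε k = 0 := by
      by_contra h0
      exact hk (hunique _ k ⟨rfl, h0⟩)
    have hpos : (e (t (e k).1)).2 ≠ (e k).2 := fun hpos =>
      hk (e.injective (Prod.ext (ht _).1.symm hpos.symm))
    simp only [signPattern, hpos, if_false, hzero]

lemma setOf_isSignedTransversal_eq_range :
    {ε | IsSignedTransversal e ε} = Set.range (signPattern e) :=
  Set.ext fun _ => ⟨fun h => h.exists_signPattern_eq e,
    fun ⟨c, hc⟩ => hc ▸ isSignedTransversal_signPattern e c⟩

end Pattern

lemma card_fst_eq [Fintype B] [DecidableEq B] [Fintype P] [DecidableEq P] (b : B) (a : P) :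
    Fintype.card {c : B → P × ℤˣ // (c b).1 = a} =
      2 * (2 * Fintype.card P) ^ (Fintype.card B - 1) := by
  rw [Fintype.card_congr ((Equiv.piSplitAt b fun _ => P × ℤˣ).subtypeEquiv
      (p := fun c => (c b).1 = a) (q := fun x => x.1.1 = a) fun _ => Iff.rfl),
    Fintype.card_congr (Equiv.prodSubtypeFstEquivSubtypeProd (p := fun y : P × ℤˣ => y.1 = a)),
    Fintype.card_prod,
    Fintype.card_congr (Equiv.prodSubtypeFstEquivSubtypeProd (p := fun x : P => x = a))]
  simp [Fintype.card_subtype_compl, mul_comm]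

variable [Fintype B] [DecidableEq B] [Fintype P] [DecidableEq P] (e : K ≃ B × P)

lemma sum_signPattern_mul_self (k : K) :
    ∑ c, signPattern e c k * signPattern e c k =
      ((2 * (2 * Fintype.card P) ^ (Fintype.card B - 1) : ℕ) : ℂ) := by
  simp_rw [signPattern_mul_self, Finset.sum_boole, ← card_fst_eq (e k).1 (e k).2,
    Fintype.card_subtype]

lemma sum_signPattern_mul_of_fst_ne {k k' : K} (h : (e k).1 ≠ (e k').1) :
    ∑ c, signPattern e c k * signPattern e c k' = 0 := by
  set b := (e k').1
  let flip : (B → P × ℤˣ) → (B → P × ℤˣ) := fun c => update c b ((c b).1, -(c b).2)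
  have hflip : Involutive flip := fun c => by
    funext b'
    rcases eq_or_ne b' b with rfl | hb
    · simp [flip]
    · simp [flip, update_of_ne hb]
  have hterm : ∀ c, signPattern e (flip c) k * signPattern e (flip c) k' =
      -(signPattern e c k * signPattern e c k') := fun c => by
    simp only [signPattern, flip, update_of_ne h, update_self, b]
    split_ifs <;> push_cast <;> ring
  rw [← neg_eq_self, ← Finset.sum_neg_distrib]
  simp_rw [← hterm]
  exact Equiv.sum_comp hflip.toPerm (fun c => signPattern e c k * signPattern e c k')

lemma sum_signPattern_mul_of_ne {k k' : K} (h : k ≠ k') :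
    ∑ c, signPattern e c k * signPattern e c k' = 0 := by
  by_cases hb : (e k).1 = (e k').1
  · refine Finset.sum_eq_zero fun c _ => ?_
    by_contra hne
    obtain ⟨hk, hk'⟩ := mul_ne_zero_iff.1 hne
    rw [signPattern_ne_zero_iff, hb] at hk
    rw [signPattern_ne_zero_iff] at hk'
    exact h (e.injective (Prod.ext hb (hk.symm.trans hk')))
  · exact sum_signPattern_mul_of_fst_ne e hb

lemma finsum_isSignedTransversal [Fintype K] (lam : K → ℂ) (k : K) :
    ∑ᶠ ε ∈ {ε | IsSignedTransversal e ε}, (∑ i, ε i * lam i) * ε k =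
      ((2 * (2 * Fintype.card P) ^ (Fintype.card B - 1) : ℕ) : ℂ) * lam k := by
  rw [setOf_isSignedTransversal_eq_range, finsum_mem_range (signPattern_injective e),
    finsum_eq_sum_of_fintype]
  calc ∑ c, (∑ i, signPattern e c i * lam i) * signPattern e c k
      = ∑ i, lam i * ∑ c, signPattern e c i * signPattern e c k := by
        simp_rw [Finset.sum_mul, Finset.mul_sum]
        rw [Finset.sum_comm]
        exact Finset.sum_congr rfl fun i _ => Finset.sum_congr rfl fun c _ => by ring
    _ = lam k * ∑ c, signPattern e c k * signPattern e c k :=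
        Finset.sum_eq_single k (fun i _ hi => by rw [sum_signPattern_mul_of_ne e hi, mul_zero])
          (by simp)
    _ = _ := by rw [sum_signPattern_mul_self, mul_comm]

lemma ncard_setOf_isSignedTransversal [Nonempty B] :
    {ε | IsSignedTransversal e ε}.ncard =
      2 * (2 * Fintype.card P) ^ (Fintype.card B - 1) * Fintype.card P := by
  rw [setOf_isSignedTransversal_eq_range, ← Nat.card_coe_set_eq,
    Nat.card_range_of_injective (signPattern_injective e), Nat.card_eq_fintype_card,
    Fintype.card_fun, Fintype.card_prod, Fintype.card_units_int]
  obtain ⟨n, hn⟩ : ∃ n, Fintype.card B = n + 1 :=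
    Nat.exists_eq_succ_of_ne_zero Fintype.card_ne_zero
  rw [hn, Nat.add_sub_cancel, pow_succ]
  ring

lemma ncard_setOf_isSignedTransversal_apply_ne_zero (k : K) :
    {ε | IsSignedTransversal e ε ∧ ε k ≠ 0}.ncard =
      2 * (2 * Fintype.card P) ^ (Fintype.card B - 1) := by
  have himage : {ε | IsSignedTransversal e ε ∧ ε k ≠ 0} =
      signPattern e '' {c | (c (e k).1).1 = (e k).2} := by
    ext ε
    constructor
    · rintro ⟨h, hk⟩
      obtain ⟨c, rfl⟩ := h.exists_signPattern_eq e
      exact ⟨c, (signPattern_ne_zero_iff e c k).1 hk, rfl⟩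
    · rintro ⟨c, hc, rfl⟩
      exact ⟨isSignedTransversal_signPattern e c, (signPattern_ne_zero_iff e c k).2 hc⟩
  rw [himage, Set.ncard_image_of_injective _ (signPattern_injective e), ← Nat.card_coe_set_eq,
    Nat.card_eq_fintype_card]
  exact card_fst_eq _ _

end SignedTransversal

-- `k ↦ (k / 2^ν₀, k % 2^ν₀)` coordinatewise: the block containing `k` and the position in it.
def dyadicBlockEquiv {d j ν₀ : ℕ} (hle : ν₀ ≤ j) :
    MorreyIdx d j ≃ (Fin d → Fin (2 ^ (j - ν₀))) × (Fin d → Fin (2 ^ ν₀)) :=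
  (Equiv.piCongrRight fun _ =>
      (finCongr (by rw [← pow_add, Nat.sub_add_cancel hle])).trans finProdFinEquiv.symm).trans
    (Equiv.arrowProdEquivProdArrow _ _ _)

lemma memSubcube_iff_dyadicBlockEquiv_fst {d j ν₀ : ℕ} (hle : ν₀ ≤ j)
    (m : Fin d → Fin (2 ^ (j - ν₀))) (k : MorreyIdx d j) :
    memSubcube ν₀ (fun i => (m i : ℕ)) k ↔ (dyadicBlockEquiv hle k).1 = m := by
  simp [memSubcube, dyadicBlockEquiv, funext_iff, Fin.ext_iff]

lemma memE_iff_isSignedTransversal {d j ν₀ : ℕ} (hle : ν₀ ≤ j) (ε : MorreyIdx d j → ℂ) :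
    memE d j ν₀ ε ↔ IsSignedTransversal (dyadicBlockEquiv hle) ε := by
  simp only [memE, IsSignedTransversal, memSubcube_iff_dyadicBlockEquiv_fst hle]

theorem stmt17_general (d : ℕ) (j ν₀ : ℕ) (hle : ν₀ ≤ j) :
    ∃ α₀ : ℕ,
      (∀ k : MorreyIdx d j,
        Set.ncard {ε : MorreyIdx d j → ℂ | memE d j ν₀ ε ∧ ε k ≠ 0} = α₀) ∧
      Set.ncard {ε : MorreyIdx d j → ℂ | memE d j ν₀ ε} = α₀ * 2 ^ (ν₀ * d) ∧
      (∀ (lam : MorreyIdx d j → ℂ) (k : MorreyIdx d j),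
        (∑ᶠ ε ∈ {ε : MorreyIdx d j → ℂ | memE d j ν₀ ε}, (∑ i, ε i * lam i) * ε k)
          = (α₀ : ℂ) * lam k) ∧
      (∀ (lam : MorreyIdx d j → ℂ) (k : MorreyIdx d j),
        ((2 : ℂ) ^ (ν₀ * d) /
            (Set.ncard {ε : MorreyIdx d j → ℂ | memE d j ν₀ ε} : ℂ)) *
          ∑ᶠ ε ∈ {ε : MorreyIdx d j → ℂ | memE d j ν₀ ε}, (∑ i, ε i * lam i) * ε k
            = lam k) := by
  have hcard : Fintype.card (Fin d → Fin (2 ^ ν₀)) = 2 ^ (ν₀ * d) := by simp [pow_mul]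
  set e := dyadicBlockEquiv (d := d) hle
  simp_rw [memE_iff_isSignedTransversal hle]
  have htotal := ncard_setOf_isSignedTransversal e
  have hsum := finsum_isSignedTransversal e
  rw [hcard] at htotal hsum
  refine ⟨_, fun k => ?_, htotal, hsum, fun lam k => ?_⟩
  · rw [ncard_setOf_isSignedTransversal_apply_ne_zero, hcard]
  · rw [hsum, htotal]
    push_cast
    field_simp

/-- (a) the number of `ε ∈ ℰ` with `ε_k ≠ 0` is a number `α₀` independent
of `k ∈ 𝒦_j`, and `|ℰ| = α₀ · 2^{ν₀ d}`; (b) `∑_{ε ∈ ℰ} (∑_i ε_i λ_i) ε_k = α₀ λ_k`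
for all `λ` and `k`; in particular the identity on `ℂ^{𝒦_j}` equals
`(2^{ν₀ d}/|ℰ|) ∑_{ε ∈ ℰ} ε ⊗ ε`. -/
theorem stmt17 (d : ℕ) (hd : 0 < d) (j ν₀ : ℕ) (hj : 1 ≤ j) (hν₀ : 1 ≤ ν₀)
    (hle : ν₀ ≤ j) :
    ∃ α₀ : ℕ,
      (∀ k : MorreyIdx d j,
        Set.ncard {ε : MorreyIdx d j → ℂ | memE d j ν₀ ε ∧ ε k ≠ 0} = α₀) ∧
      Set.ncard {ε : MorreyIdx d j → ℂ | memE d j ν₀ ε} = α₀ * 2 ^ (ν₀ * d) ∧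
      (∀ (lam : MorreyIdx d j → ℂ) (k : MorreyIdx d j),
        (∑ᶠ ε ∈ {ε : MorreyIdx d j → ℂ | memE d j ν₀ ε}, (∑ i, ε i * lam i) * ε k)
          = (α₀ : ℂ) * lam k) ∧
      (∀ (lam : MorreyIdx d j → ℂ) (k : MorreyIdx d j),
        ((2 : ℂ) ^ (ν₀ * d) /
            (Set.ncard {ε : MorreyIdx d j → ℂ | memE d j ν₀ ε} : ℂ)) *
          ∑ᶠ ε ∈ {ε : MorreyIdx d j → ℂ | memE d j ν₀ ε}, (∑ i, ε i * lam i) * ε k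
            = lam k) :=
  stmt17_general d j ν₀ hle
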